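/- arXiv:2003.11123 — 4 statements merged into one kernel-verified Lean document; each statement's English description precedes it below -/
import Mathlib

section
/- Let φ: A → A' be a bijective unital multiplicative *-Lie-Jordan n-map between unital C*-algebras. Then φ(2^{n-2}(A + A*)) = 2^{n-2}(φ(A) + φ(A)*) and φ(2^{n-2}(A - A*)) = 2^{n-2}(φ(A) - φ(A)*) for every A ∈ A. -/
def lieStar {R : Type*} [NonUnitalRing R] [StarRing R] (x y : R) : R := x * y - y * star x
def jordanStar {R : Type*} [NonUnitalRing R] [StarRing R] (x y : R) : R := x * y + y * star x
def pStar {R : Type*} [NonUnitalRing R] [StarRing R] (x : R) (l : List R) : R := l.foldl lieStar x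
def qStar {R : Type*} [NonUnitalRing R] [StarRing R] (x : R) (l : List R) : R := l.foldl jordanStar x

lemma qStar_ones {R : Type*} [Ring R] [StarRing R] (k : ℕ) (x : R) :
    qStar x (List.replicate (k+1) (1:R)) = 2 ^ k * (x + star x) := by
  induction k generalizing x with
  | zero => simp [qStar, jordanStar]
  | succ k ih =>
    rw [List.replicate_succ]
    show qStar (jordanStar x 1) (List.replicate (k+1) (1:R)) = _
    rw [ih]
    simp only [jordanStar, mul_one, one_mul, star_add, star_star]
    rw [pow_succ]
    noncomm_ring

lemma pStar_ones {R : Type*} [Ring R] [StarRing R] (k : ℕ) (x : R) :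
    pStar x (List.replicate (k+1) (1:R)) = 2 ^ k * (x - star x) := by
  induction k generalizing x with
  | zero => simp [pStar, lieStar]
  | succ k ih =>
    rw [List.replicate_succ]
    show pStar (lieStar x 1) (List.replicate (k+1) (1:R)) = _
    rw [ih]
    simp only [lieStar, mul_one, one_mul, star_sub, star_star]
    rw [pow_succ]
    noncomm_ring

/-- φ(2^{n-2}(A ± A*)) = 2^{n-2}(φ(A) ± φ(A)*). -/
theorem starLieJordanMap_re_im {A B : Type*} [NormedRing A] [StarRing A] [CStarRing A] [NormedAlgebra ℂ A] [CompleteSpace A] [StarModule ℂ A] [NormedRing B] [StarRing B] [CStarRing B] [NormedAlgebra ℂ B] [CompleteSpace B] [StarModule ℂ B]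
    (n : ℕ) (hn : 2 ≤ n) (φ : A → B) (hbij : Function.Bijective φ) (hφ1 : φ 1 = 1)
    (hp : ∀ (x : A) (l : List A), l.length = n - 1 → φ (pStar x l) = pStar (φ x) (l.map φ))
    (hq : ∀ (x : A) (l : List A), l.length = n - 1 → φ (qStar x l) = qStar (φ x) (l.map φ)) (a : A) :
    φ (2 ^ (n - 2) * (a + star a)) = 2 ^ (n - 2) * (φ a + star (φ a)) ∧
    φ (2 ^ (n - 2) * (a - star a)) = 2 ^ (n - 2) * (φ a - star (φ a)) := by
  have hlen : n - 1 = (n - 2) + 1 := by omega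
  have hmap : (List.replicate (n-1) (1:A)).map φ = List.replicate (n-1) (1:B) := by
    simp [List.map_replicate, hφ1]
  constructor
  · have h := hq a (List.replicate (n-1) (1:A)) (by simp)
    rw [hmap, hlen, qStar_ones, qStar_ones] at h
    exact h
  · have h := hp a (List.replicate (n-1) (1:A)) (by simp)
    rw [hmap, hlen, pStar_ones, pStar_ones] at h
    exact h
end

section
/- Let A be a unital C*-algebra and P₁ a nontrivial projection with P₂ = I - P₁. For A_{ii} ∈ P_i A P_i and B_{ij} ∈ P_i A P_j (i ≠ j) and n ≥ 2: p_{n*}(A_{ii} + B_{ij}, P_i, ..., P_i) = p_{n*}(A_{ii}, P_i, ..., P_i) = 2^{n-2}(A_{ii} - A_{ii}*), where p_{n*} is applied with n-1 copies of P_i. -/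
lemma pStar_cons {R : Type*} [NonUnitalRing R] [StarRing R] (x y : R) (l : List R) :
    pStar x (y :: l) = pStar (lieStar x y) l := rfl

lemma pStar_skew_corner {R : Type*} [Ring R] [StarRing R] (Pi c : R)
    (hPi : Pi * Pi = Pi) (hPis : star Pi = Pi)
    (hc : Pi * c * Pi = c) (hsc : star c = -c) (k : ℕ) :
    pStar c (List.replicate k Pi) = 2 ^ k * c := by
  induction k generalizing c with
  | zero => simp [pStar]
  | succ k ih =>
    have hcP : c * Pi = c := by
      conv_lhs => rw [← hc]
      rw [mul_assoc, mul_assoc, hPi, ← mul_assoc, hc]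
    have hPc : Pi * c = c := by
      conv_lhs => rw [← hc]
      rw [← mul_assoc, ← mul_assoc, hPi, hc]
    have h1 : lieStar c Pi = 2 * c := by
      rw [lieStar, hsc, hcP, mul_neg, hPc, sub_neg_eq_add, two_mul]
    rw [List.replicate_succ, pStar_cons, h1]
    rw [ih (2 * c) (by rw [show Pi * (2 * c) * Pi = 2 * (Pi * c * Pi) by noncomm_ring, hc])
      (by rw [star_mul, hsc, star_ofNat]; noncomm_ring)]
    rw [← mul_assoc, ← pow_succ]

/-- For A_{ii} ∈ P_i A P_i and B_{ij} ∈ P_i A P_j (i ≠ j),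
p_{n*}(A_{ii}+B_{ij}, P_i,...,P_i) = p_{n*}(A_{ii}, P_i,...,P_i) = 2^{n-2}(A_{ii} - A_{ii}*). -/
theorem pStar_corner {A : Type*} [NormedRing A] [StarRing A] [CStarRing A] [NormedAlgebra ℂ A] [CompleteSpace A] [StarModule ℂ A] (P : A) (hPidem : P * P = P) (hPsa : star P = P) (hP0 : P ≠ 0) (hP1 : P ≠ 1)
    (n : ℕ) (hn : 2 ≤ n) (Pi : A) (hi : Pi = P ∨ Pi = 1 - P)
    (a b : A) (ha : Pi * a * Pi = a) (hb : Pi * b * (1 - Pi) = b) :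
    pStar (a + b) (List.replicate (n - 1) Pi) = pStar a (List.replicate (n - 1) Pi) ∧
    pStar a (List.replicate (n - 1) Pi) = 2 ^ (n - 2) * (a - star a) := by
  have hPi : Pi * Pi = Pi := by
    rcases hi with rfl | rfl
    · exact hPidem
    · simp [sub_mul, mul_sub, hPidem]
  have hPis : star Pi = Pi := by
    rcases hi with rfl | rfl
    · exact hPsa
    · rw [star_sub, star_one, hPsa]
  obtain ⟨m, rfl⟩ : ∃ m, n = m + 2 := ⟨n - 2, by omega⟩
  have hrep : m + 2 - 1 = m + 1 := by omega
  rw [hrep, List.replicate_succ, pStar_cons, pStar_cons]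
  have hsa : star a = Pi * star a * Pi := by
    conv_lhs => rw [← ha]
    rw [star_mul, star_mul, hPis, ← mul_assoc]
  have haP : a * Pi = a := by
    conv_lhs => rw [← ha]
    rw [mul_assoc, mul_assoc, hPi, ← mul_assoc, ha]
  have hPsa' : Pi * star a = star a := by
    conv_lhs => rw [hsa]
    rw [← mul_assoc, ← mul_assoc, hPi, ← hsa]
  have hbP : b * Pi = 0 := by
    conv_lhs => rw [← hb]
    rw [mul_assoc, mul_assoc, sub_mul, one_mul, hPi, sub_self, mul_zero, mul_zero]
  have hPsb : Pi * star b = 0 := by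
    have hsb : star b = (1 - Pi) * star b * Pi := by
      conv_lhs => rw [← hb]
      rw [star_mul, star_mul, star_sub, star_one, hPis, ← mul_assoc]
    rw [hsb, ← mul_assoc, ← mul_assoc, mul_sub, mul_one, hPi, sub_self, zero_mul, zero_mul]
  have hla : lieStar a Pi = a - star a := by
    rw [lieStar, haP, hPsa']
  have hlab : lieStar (a + b) Pi = a - star a := by
    rw [lieStar, add_mul, haP, hbP, add_zero, star_add, mul_add, hPsa', hPsb, add_zero]
  have hcorner : Pi * (a - star a) * Pi = a - star a := by
    rw [mul_sub, sub_mul, ha, ← hsa]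
  have hskew : star (a - star a) = -(a - star a) := by
    rw [star_sub, star_star, neg_sub]
  rw [hla, hlab]
  refine ⟨rfl, ?_⟩
  rw [pStar_skew_corner Pi _ hPi hPis hcorner hskew m]
  norm_num
end

section
/- Let φ: A → A' be a bijective unital multiplicative *-Lie-Jordan n-map between unital C*-algebras, and P₁ a nontrivial projection with P₂ = I - P₁. Then φ is additive on the full Peirce decomposition: φ(A_{11} + B_{12} + C_{21} + D_{22}) = φ(A_{11}) + φ(B_{12}) + φ(C_{21}) + φ(D_{22}) for all A_{11} ∈ P₁AP₁, B_{12} ∈ P₁AP₂, C_{21} ∈ P₂AP₁, D_{22} ∈ P₂AP₂. -/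
section Aux
variable {R : Type*} [Ring R] [StarRing R]

private def sAdd (z : R) : R := z + star z
private def sSub (z : R) : R := z - star z

private lemma foldl_jordan_ones (x : R) (k : ℕ) :
    List.foldl jordanStar x (List.replicate k 1) = sAdd^[k] x := by
  induction k generalizing x with
  | zero => simp
  | succ k ih =>
      rw [List.replicate_succ, List.foldl_cons, Function.iterate_succ_apply]
      rw [show jordanStar x 1 = sAdd x by simp [jordanStar, sAdd]]
      exact ih _

private lemma foldl_lie_ones (x : R) (k : ℕ) :
    List.foldl lieStar x (List.replicate k 1) = sSub^[k] x := by
  induction k generalizing x with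
  | zero => simp
  | succ k ih =>
      rw [List.replicate_succ, List.foldl_cons, Function.iterate_succ_apply]
      rw [show lieStar x 1 = sSub x by simp [lieStar, sSub]]
      exact ih _

private lemma sAdd_jordan (x y : R) : sAdd (jordanStar x y) = jordanStar x (sAdd y) := by
  simp only [sAdd, jordanStar, star_add, star_mul, star_star, mul_add, add_mul]
  abel

private lemma sSub_lie (x y : R) : sSub (lieStar x y) = lieStar x (sAdd y) := by
  simp only [sSub, sAdd, lieStar, star_sub, star_mul, star_star, mul_add, add_mul]
  abel

private lemma sAdd_iter_jordan (k : ℕ) (x y : R) :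
    sAdd^[k] (jordanStar x y) = jordanStar x (sAdd^[k] y) := by
  induction k generalizing y with
  | zero => rfl
  | succ k ih =>
      rw [Function.iterate_succ_apply, sAdd_jordan, ih, Function.iterate_succ_apply]

private lemma sSub_iter_lie (k : ℕ) (x y : R) :
    sSub^[k] (lieStar x y) = lieStar x (sAdd^[k] y) := by
  induction k generalizing y with
  | zero => rfl
  | succ k ih =>
      rw [Function.iterate_succ_apply, sSub_lie, ih, Function.iterate_succ_apply]

private lemma qStar_ones_append (x v : R) (k : ℕ) :
    qStar x (List.replicate k 1 ++ [v]) = jordanStar (sAdd^[k] x) v := by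
  unfold qStar
  rw [List.foldl_append, foldl_jordan_ones]
  rfl

private lemma qStar_cons_ones (v y : R) (k : ℕ) :
    qStar v (y :: List.replicate k 1) = jordanStar v (sAdd^[k] y) := by
  unfold qStar
  rw [List.foldl_cons, foldl_jordan_ones, sAdd_iter_jordan]

private lemma pStar_cons_ones (v y : R) (k : ℕ) :
    pStar v (y :: List.replicate k 1) = lieStar v (sAdd^[k] y) := by
  unfold pStar
  rw [List.foldl_cons, foldl_lie_ones, sSub_iter_lie]

private lemma sAdd_iter_smul {S : Type*} [Ring S] [StarRing S] [Module ℂ S] [StarModule ℂ S]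
    (k : ℕ) (c : ℂ) (hc : star c = c) (h : S) (hh : star h = h) :
    sAdd^[k] (c • h) = ((2:ℂ)^k * c) • h := by
  induction k generalizing c with
  | zero => simp
  | succ k ih =>
      rw [Function.iterate_succ_apply]
      have h1 : sAdd (c • h) = ((2:ℂ)*c) • h := by
        simp only [sAdd, star_smul, hc, hh]
        rw [two_mul, add_smul]
      rw [h1, ih (2*c) (by rw [star_mul', hc]; norm_num)]
      congr 1
      ring

private lemma cm_left {e f w : R} (he : e*e = e) (hw : e*w*f = w) : e*w = w := by
  calc e*w = e*(e*w*f) := by rw [hw]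
    _ = ((e*e)*w)*f := by noncomm_ring
    _ = (e*w)*f := by rw [he]
    _ = w := hw

private lemma cm_right {e f w : R} (hf : f*f = f) (hw : e*w*f = w) : w*f = w := by
  calc w*f = (e*w*f)*f := by rw [hw]
    _ = (e*w)*(f*f) := by noncomm_ring
    _ = (e*w)*f := by rw [hf]
    _ = w := hw

private lemma cm_left0 {g e w : R} (hge : g*e = 0) (hew : e*w = w) : g*w = 0 := by
  rw [← hew, ← mul_assoc, hge, zero_mul]

private lemma cm_right0 {w f g : R} (hwf : w*f = w) (hfg : f*g = 0) : w*g = 0 := by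
  rw [← hwf, mul_assoc, hfg, mul_zero]

end Aux

/-- φ is additive on the full Peirce decomposition. -/
theorem starLieJordanMap_add_peirce {A B : Type*} [NormedRing A] [StarRing A] [CStarRing A] [NormedAlgebra ℂ A] [CompleteSpace A] [StarModule ℂ A] [NormedRing B] [StarRing B] [CStarRing B] [NormedAlgebra ℂ B] [CompleteSpace B] [StarModule ℂ B]
    (n : ℕ) (hn : 2 ≤ n) (φ : A → B) (hbij : Function.Bijective φ) (hφ1 : φ 1 = 1)
    (hp : ∀ (x : A) (l : List A), l.length = n - 1 → φ (pStar x l) = pStar (φ x) (l.map φ))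
    (hq : ∀ (x : A) (l : List A), l.length = n - 1 → φ (qStar x l) = qStar (φ x) (l.map φ)) (P : A) (hPidem : P * P = P) (hPsa : star P = P) (hP0 : P ≠ 0) (hP1 : P ≠ 1)
    (a b c d : A) (ha : P * a * P = a) (hb : P * b * (1 - P) = b)
    (hc : (1 - P) * c * P = c) (hd : (1 - P) * d * (1 - P) = d) :
    φ (a + b + c + d) = φ a + φ b + φ c + φ d := by
  -- basic projection facts
  have hQQ : (1-P)*(1-P) = (1-P) := by
    have : (1-P)*(1-P) = 1 - P - P + P*P := by noncomm_ring
    rw [this, hPidem]; abel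
  have hPQ : P*(1-P) = 0 := by rw [mul_sub, mul_one, hPidem, sub_self]
  have hQP : (1-P)*P = 0 := by rw [sub_mul, one_mul, hPidem, sub_self]
  have hQsa : star (1-P : A) = 1-P := by rw [star_sub, star_one, hPsa]
  have hDsa : star (P - (1-P) : A) = P - (1-P) := by rw [star_sub, hQsa, hPsa]
  -- scalar realization of self-adjoint elements
  have hreal : ∀ h : A, star h = h → sAdd^[n-2] ((((2:ℂ)^(n-2))⁻¹) • h) = h := by
    intro h hh
    have hcs : star (((2:ℂ)^(n-2))⁻¹) = ((2:ℂ)^(n-2))⁻¹ := by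
      simp
    rw [sAdd_iter_smul _ _ hcs h hh, mul_inv_cancel₀ (pow_ne_zero _ two_ne_zero), one_smul]
  -- Key intertwining lemmas
  have K1 : ∀ h : A, star h = h → ∃ H : B, ∀ v : A,
      φ (h * v + v * h) = H * φ v + φ v * star H := by
    intro h hh
    refine ⟨sAdd^[n-2] (φ ((((2:ℂ)^(n-2))⁻¹) • h)), fun v => ?_⟩
    have hlen : (List.replicate (n-2) (1:A) ++ [v]).length = n - 1 := by
      simp; omega
    have h' := hq ((((2:ℂ)^(n-2))⁻¹) • h) (List.replicate (n-2) 1 ++ [v]) hlen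
    rw [qStar_ones_append, hreal h hh] at h'
    rw [show (List.replicate (n-2) (1:A) ++ [v]).map φ
        = List.replicate (n-2) (1:B) ++ [φ v] by simp [hφ1]] at h'
    rw [qStar_ones_append] at h'
    simpa [jordanStar, hh] using h'
  have K2 : ∀ z : A, star z = z → ∃ Z : B, ∀ v : A,
      φ (v * z + z * star v) = φ v * Z + Z * star (φ v) := by
    intro z hz
    refine ⟨sAdd^[n-2] (φ ((((2:ℂ)^(n-2))⁻¹) • z)), fun v => ?_⟩
    have hlen : (((((2:ℂ)^(n-2))⁻¹) • z) :: List.replicate (n-2) (1:A)).length = n - 1 := by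
      simp; omega
    have h' := hq v (((((2:ℂ)^(n-2))⁻¹) • z) :: List.replicate (n-2) 1) hlen
    rw [qStar_cons_ones, hreal z hz] at h'
    rw [show (((((2:ℂ)^(n-2))⁻¹) • z) :: List.replicate (n-2) (1:A)).map φ
        = φ ((((2:ℂ)^(n-2))⁻¹) • z) :: List.replicate (n-2) (1:B) by simp [hφ1]] at h'
    rw [qStar_cons_ones] at h'
    simpa [jordanStar] using h'
  have K3 : ∀ z : A, star z = z → ∃ Z : B, ∀ v : A,
      φ (v * z - z * star v) = φ v * Z - Z * star (φ v) := by
    intro z hz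
    refine ⟨sAdd^[n-2] (φ ((((2:ℂ)^(n-2))⁻¹) • z)), fun v => ?_⟩
    have hlen : (((((2:ℂ)^(n-2))⁻¹) • z) :: List.replicate (n-2) (1:A)).length = n - 1 := by
      simp; omega
    have h' := hp v (((((2:ℂ)^(n-2))⁻¹) • z) :: List.replicate (n-2) 1) hlen
    rw [pStar_cons_ones, hreal z hz] at h'
    rw [show (((((2:ℂ)^(n-2))⁻¹) • z) :: List.replicate (n-2) (1:A)).map φ
        = φ ((((2:ℂ)^(n-2))⁻¹) • z) :: List.replicate (n-2) (1:B) by simp [hφ1]] at h'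
    rw [pStar_cons_ones] at h'
    simpa [lieStar] using h'
  -- φ 0 = 0
  have hphi0 : φ 0 = 0 := by
    obtain ⟨H, hH⟩ := K1 0 (star_zero A)
    obtain ⟨w, hw⟩ := hbij.surjective 0
    have h' := hH w
    rw [zero_mul, mul_zero, add_zero, hw, mul_zero, zero_mul, add_zero] at h'
    exact h'
  -- cancellation of doubling
  have two_cancel : ∀ u v : A, u + u = v + v → u = v := by
    intro u v huv
    have h2 : (2:ℂ) • u = (2:ℂ) • v := by rw [two_smul, two_smul]; exact huv
    calc u = (2:ℂ)⁻¹ • ((2:ℂ) • u) := (inv_smul_smul₀ two_ne_zero u).symm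
      _ = (2:ℂ)⁻¹ • ((2:ℂ) • v) := by rw [h2]
      _ = v := inv_smul_smul₀ two_ne_zero v
  -- Claim: additivity on A₁₂ + A₂₁
  have claimBC : ∀ b c : A, P * b * (1-P) = b → (1-P) * c * P = c →
      φ (b + c) = φ b + φ c := by
    intro b c hb hc
    have hbL : P * b = b := cm_left hPidem hb
    have hbR : b * (1-P) = b := cm_right hQQ hb
    have hbL0 : (1-P) * b = 0 := cm_left0 hQP hbL
    have hbR0 : b * P = 0 := cm_right0 hbR hQP
    have hcL : (1-P) * c = c := cm_left hQQ hc
    have hcR : c * P = c := cm_right hPidem hc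
    have hcL0 : P * c = 0 := cm_left0 hPQ hcL
    have hcR0 : c * (1-P) = 0 := cm_right0 hcR hPQ
    have hsb : (1-P) * star b * P = star b := by
      have h' := congrArg star hb
      simp only [star_mul, star_sub, star_one, hPsa] at h'
      rw [mul_assoc]; exact h'
    have hsc : P * star c * (1-P) = star c := by
      have h' := congrArg star hc
      simp only [star_mul, star_sub, star_one, hPsa] at h'
      rw [mul_assoc]; exact h'
    have hsbL : (1-P) * star b = star b := cm_left hQQ hsb
    have hsbR : star b * P = star b := cm_right hPidem hsb
    have hsbL0 : P * star b = 0 := cm_left0 hPQ hsbL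
    have hsbR0 : star b * (1-P) = 0 := cm_right0 hsbR hPQ
    have hscL : P * star c = star c := cm_left hPidem hsc
    have hscR : star c * (1-P) = star c := cm_right hQQ hsc
    have hscL0 : (1-P) * star c = 0 := cm_left0 hQP hscL
    have hscR0 : star c * P = 0 := cm_right0 hscR hQP
    obtain ⟨t, ht⟩ := hbij.surjective (φ b + φ c)
    obtain ⟨Z, hZ⟩ := K2 P hPsa
    obtain ⟨Y, hY⟩ := K3 P hPsa
    obtain ⟨W, hW⟩ := K2 (1-P) hQsa
    obtain ⟨V, hV⟩ := K3 (1-P) hQsa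
    have hb0 : φ b * Z + Z * star (φ b) = 0 := by
      have h' := hZ b
      rw [hbR0, hsbL0, add_zero, hphi0] at h'
      exact h'.symm
    have hc1 : φ (c + star c) = φ c * Z + Z * star (φ c) := by
      have h' := hZ c; rw [hcR, hscL] at h'; exact h'
    have e1 : t * P + P * star t = c + star c := by
      apply hbij.injective
      rw [hZ t, ht, hc1]
      calc (φ b + φ c) * Z + Z * star (φ b + φ c)
          = (φ b * Z + Z * star (φ b)) + (φ c * Z + Z * star (φ c)) := by
            rw [star_add]; noncomm_ring
        _ = φ c * Z + Z * star (φ c) := by rw [hb0, zero_add]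
    have hb0' : φ b * Y - Y * star (φ b) = 0 := by
      have h' := hY b
      rw [hbR0, hsbL0, sub_zero, hphi0] at h'
      exact h'.symm
    have hc1' : φ (c - star c) = φ c * Y - Y * star (φ c) := by
      have h' := hY c; rw [hcR, hscL] at h'; exact h'
    have e2 : t * P - P * star t = c - star c := by
      apply hbij.injective
      rw [hY t, ht, hc1']
      calc (φ b + φ c) * Y - Y * star (φ b + φ c)
          = (φ b * Y - Y * star (φ b)) + (φ c * Y - Y * star (φ c)) := by
            rw [star_add]; noncomm_ring
        _ = φ c * Y - Y * star (φ c) := by rw [hb0', zero_add]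
    have etP : t * P = c := by
      apply two_cancel
      calc t*P + t*P = (t * P + P * star t) + (t * P - P * star t) := by abel
        _ = (c + star c) + (c - star c) := by rw [e1, e2]
        _ = c + c := by abel
    -- now with 1-P
    have hc0 : φ c * W + W * star (φ c) = 0 := by
      have h' := hW c
      rw [hcR0, hscL0, add_zero, hphi0] at h'
      exact h'.symm
    have hb1 : φ (b + star b) = φ b * W + W * star (φ b) := by
      have h' := hW b; rw [hbR, hsbL] at h'; exact h'
    have f1 : t * (1-P) + (1-P) * star t = b + star b := by
      apply hbij.injective
      rw [hW t, ht, hb1]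
      calc (φ b + φ c) * W + W * star (φ b + φ c)
          = (φ b * W + W * star (φ b)) + (φ c * W + W * star (φ c)) := by
            rw [star_add]; noncomm_ring
        _ = φ b * W + W * star (φ b) := by rw [hc0, add_zero]
    have hc0' : φ c * V - V * star (φ c) = 0 := by
      have h' := hV c
      rw [hcR0, hscL0, sub_zero, hphi0] at h'
      exact h'.symm
    have hb1' : φ (b - star b) = φ b * V - V * star (φ b) := by
      have h' := hV b; rw [hbR, hsbL] at h'; exact h'
    have f2 : t * (1-P) - (1-P) * star t = b - star b := by
      apply hbij.injective
      rw [hV t, ht, hb1']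
      calc (φ b + φ c) * V - V * star (φ b + φ c)
          = (φ b * V - V * star (φ b)) + (φ c * V - V * star (φ c)) := by
            rw [star_add]; noncomm_ring
        _ = φ b * V - V * star (φ b) := by rw [hc0', add_zero]
    have etQ : t * (1-P) = b := by
      apply two_cancel
      calc t*(1-P) + t*(1-P)
          = (t * (1-P) + (1-P) * star t) + (t * (1-P) - (1-P) * star t) := by abel
        _ = (b + star b) + (b - star b) := by rw [f1, f2]
        _ = b + b := by abel
    have htbc : t = b + c := by
      have h' : t * P + t * (1-P) = t := by noncomm_ring
      rw [etP, etQ] at h'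
      rw [← h']; abel
    rw [← htbc, ht]

  -- Claim: additivity on A₁₁ + A₁₂ + A₂₁
  have claimABC : ∀ a b c : A, P * a * P = a → P * b * (1-P) = b → (1-P) * c * P = c →
      φ (a + b + c) = φ a + φ b + φ c := by
    intro a b c ha hb hc
    have haL : P * a = a := cm_left hPidem ha
    have haR : a * P = a := cm_right hPidem ha
    have haL0 : (1-P) * a = 0 := cm_left0 hQP haL
    have haR0 : a * (1-P) = 0 := cm_right0 haR hPQ
    have hbL : P * b = b := cm_left hPidem hb
    have hbR : b * (1-P) = b := cm_right hQQ hb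
    have hbL0 : (1-P) * b = 0 := cm_left0 hQP hbL
    have hbR0 : b * P = 0 := cm_right0 hbR hQP
    have hcL : (1-P) * c = c := cm_left hQQ hc
    have hcR : c * P = c := cm_right hPidem hc
    have hcL0 : P * c = 0 := cm_left0 hPQ hcL
    have hcR0 : c * (1-P) = 0 := cm_right0 hcR hPQ
    obtain ⟨t, ht⟩ := hbij.surjective (φ a + φ b + φ c)
    obtain ⟨H, hH⟩ := K1 (P - (1-P)) hDsa
    obtain ⟨G, hG⟩ := K1 (1-P) hQsa
    have ca : (P - (1-P))*a + a*(P - (1-P)) = a + a := by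
      rw [sub_mul, mul_sub, haL, haL0, haR, haR0]; abel
    have cb : (P - (1-P))*b + b*(P - (1-P)) = 0 := by
      rw [sub_mul, mul_sub, hbL, hbL0, hbR0, hbR]; abel
    have cc : (P - (1-P))*c + c*(P - (1-P)) = 0 := by
      rw [sub_mul, mul_sub, hcL0, hcL, hcR, hcR0]; abel
    have hb0 : H * φ b + φ b * star H = 0 := by
      have h' := hH b; rw [cb, hphi0] at h'; exact h'.symm
    have hc0 : H * φ c + φ c * star H = 0 := by
      have h' := hH c; rw [cc, hphi0] at h'; exact h'.symm
    have ea : H * φ a + φ a * star H = φ (a + a) := by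
      have h' := hH a; rw [ca] at h'; exact h'.symm
    have e1 : (P - (1-P))*t + t*(P - (1-P)) = a + a := by
      apply hbij.injective
      rw [hH t, ht]
      calc H * (φ a + φ b + φ c) + (φ a + φ b + φ c) * star H
          = (H * φ a + φ a * star H) + ((H * φ b + φ b * star H)
              + (H * φ c + φ c * star H)) := by noncomm_ring
        _ = φ (a + a) := by rw [hb0, hc0, add_zero, add_zero, ea]
    have ca' : (1-P)*a + a*(1-P) = 0 := by rw [haL0, haR0, add_zero]
    have cb' : (1-P)*b + b*(1-P) = b := by rw [hbL0, hbR, zero_add]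
    have cc' : (1-P)*c + c*(1-P) = c := by rw [hcL, hcR0, add_zero]
    have e2 : (1-P)*t + t*(1-P) = b + c := by
      apply hbij.injective
      rw [hG t, ht]
      have h1 := hG a; rw [ca', hphi0] at h1
      have h2 := hG b; rw [cb'] at h2
      have h3 := hG c; rw [cc'] at h3
      rw [claimBC b c hb hc]
      calc G * (φ a + φ b + φ c) + (φ a + φ b + φ c) * star G
          = (G * φ a + φ a * star G) + ((G * φ b + φ b * star G)
              + (G * φ c + φ c * star G)) := by noncomm_ring
        _ = φ b + φ c := by rw [← h1, ← h2, ← h3, zero_add]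
    have hT : t = a + b + c := by
      apply two_cancel
      calc t + t = ((P - (1-P))*t + t*(P - (1-P)))
            + (((1-P)*t + t*(1-P)) + ((1-P)*t + t*(1-P))) := by noncomm_ring
        _ = (a + a) + ((b + c) + (b + c)) := by rw [e1, e2]
        _ = (a + b + c) + (a + b + c) := by abel
    rw [← hT, ht]
  -- Claim: additivity on A₁₂ + A₂₁ + A₂₂
  have claimBCD : ∀ b c d : A, P * b * (1-P) = b → (1-P) * c * P = c → (1-P) * d * (1-P) = d →
      φ (b + c + d) = φ b + φ c + φ d := by
    intro b c d hb hc hd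
    have hbL : P * b = b := cm_left hPidem hb
    have hbR : b * (1-P) = b := cm_right hQQ hb
    have hbL0 : (1-P) * b = 0 := cm_left0 hQP hbL
    have hbR0 : b * P = 0 := cm_right0 hbR hQP
    have hcL : (1-P) * c = c := cm_left hQQ hc
    have hcR : c * P = c := cm_right hPidem hc
    have hcL0 : P * c = 0 := cm_left0 hPQ hcL
    have hcR0 : c * (1-P) = 0 := cm_right0 hcR hPQ
    have hdL : (1-P) * d = d := cm_left hQQ hd
    have hdR : d * (1-P) = d := cm_right hQQ hd
    have hdL0 : P * d = 0 := cm_left0 hPQ hdL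
    have hdR0 : d * P = 0 := cm_right0 hdR hQP
    obtain ⟨t, ht⟩ := hbij.surjective (φ b + φ c + φ d)
    obtain ⟨H, hH⟩ := K1 (P - (1-P)) hDsa
    obtain ⟨G, hG⟩ := K1 P hPsa
    have cb : (P - (1-P))*b + b*(P - (1-P)) = 0 := by
      rw [sub_mul, mul_sub, hbL, hbL0, hbR0, hbR]; abel
    have cc : (P - (1-P))*c + c*(P - (1-P)) = 0 := by
      rw [sub_mul, mul_sub, hcL0, hcL, hcR, hcR0]; abel
    have cd : (P - (1-P))*d + d*(P - (1-P)) = -(d + d) := by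
      rw [sub_mul, mul_sub, hdL0, hdL, hdR0, hdR]; abel
    have hb0 : H * φ b + φ b * star H = 0 := by
      have h' := hH b; rw [cb, hphi0] at h'; exact h'.symm
    have hc0 : H * φ c + φ c * star H = 0 := by
      have h' := hH c; rw [cc, hphi0] at h'; exact h'.symm
    have ed : H * φ d + φ d * star H = φ (-(d + d)) := by
      have h' := hH d; rw [cd] at h'; exact h'.symm
    have e1 : (P - (1-P))*t + t*(P - (1-P)) = -(d + d) := by
      apply hbij.injective
      rw [hH t, ht]
      calc H * (φ b + φ c + φ d) + (φ b + φ c + φ d) * star H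
          = ((H * φ b + φ b * star H) + (H * φ c + φ c * star H))
              + (H * φ d + φ d * star H) := by noncomm_ring
        _ = φ (-(d + d)) := by rw [hb0, hc0, add_zero, zero_add, ed]
    have cb' : P*b + b*P = b := by rw [hbL, hbR0, add_zero]
    have cc' : P*c + c*P = c := by rw [hcL0, hcR, zero_add]
    have cd' : P*d + d*P = 0 := by rw [hdL0, hdR0, add_zero]
    have e2 : P*t + t*P = b + c := by
      apply hbij.injective
      rw [hG t, ht]
      have h1 := hG b; rw [cb'] at h1
      have h2 := hG c; rw [cc'] at h2
      have h3 := hG d; rw [cd', hphi0] at h3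
      rw [claimBC b c hb hc]
      calc G * (φ b + φ c + φ d) + (φ b + φ c + φ d) * star G
          = ((G * φ b + φ b * star G) + (G * φ c + φ c * star G))
              + (G * φ d + φ d * star G) := by noncomm_ring
        _ = φ b + φ c := by rw [← h1, ← h2, ← h3, add_zero]
    have hT : t = b + c + d := by
      apply two_cancel
      calc t + t = ((P*t + t*P) + (P*t + t*P))
            - ((P - (1-P))*t + t*(P - (1-P))) := by noncomm_ring
        _ = ((b + c) + (b + c)) - (-(d + d)) := by rw [e1, e2]
        _ = (b + c + d) + (b + c + d) := by abel
    rw [← hT, ht]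
  -- Final assembly
  have haL : P * a = a := cm_left hPidem ha
  have haR : a * P = a := cm_right hPidem ha
  have haL0 : (1-P) * a = 0 := cm_left0 hQP haL
  have haR0 : a * (1-P) = 0 := cm_right0 haR hPQ
  have hbL : P * b = b := cm_left hPidem hb
  have hbR : b * (1-P) = b := cm_right hQQ hb
  have hbL0 : (1-P) * b = 0 := cm_left0 hQP hbL
  have hbR0 : b * P = 0 := cm_right0 hbR hQP
  have hcL : (1-P) * c = c := cm_left hQQ hc
  have hcR : c * P = c := cm_right hPidem hc
  have hcL0 : P * c = 0 := cm_left0 hPQ hcL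
  have hcR0 : c * (1-P) = 0 := cm_right0 hcR hPQ
  have hdL : (1-P) * d = d := cm_left hQQ hd
  have hdR : d * (1-P) = d := cm_right hQQ hd
  have hdL0 : P * d = 0 := cm_left0 hPQ hdL
  have hdR0 : d * P = 0 := cm_right0 hdR hQP
  obtain ⟨t, ht⟩ := hbij.surjective (φ a + φ b + φ c + φ d)
  obtain ⟨G, hG⟩ := K1 P hPsa
  obtain ⟨G', hG'⟩ := K1 (1-P) hQsa
  have haa : P * (a + a) * P = a + a := by rw [mul_add, add_mul, ha]
  have hdd : (1-P) * (d + d) * (1-P) = d + d := by rw [mul_add, add_mul, hd]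
  have e1 : P*t + t*P = (a + a) + b + c := by
    apply hbij.injective
    rw [hG t, ht]
    have h1 := hG a; rw [show P*a + a*P = a + a by rw [haL, haR]] at h1
    have h2 := hG b; rw [show P*b + b*P = b by rw [hbL, hbR0, add_zero]] at h2
    have h3 := hG c; rw [show P*c + c*P = c by rw [hcL0, hcR, zero_add]] at h3
    have h4 := hG d; rw [show P*d + d*P = 0 by rw [hdL0, hdR0, add_zero], hphi0] at h4
    rw [claimABC (a+a) b c haa hb hc]
    calc G * (φ a + φ b + φ c + φ d) + (φ a + φ b + φ c + φ d) * star G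
        = (G * φ a + φ a * star G) + (G * φ b + φ b * star G)
            + (G * φ c + φ c * star G) + (G * φ d + φ d * star G) := by noncomm_ring
      _ = φ (a + a) + φ b + φ c := by rw [← h1, ← h2, ← h3, ← h4, add_zero]
  have e2 : (1-P)*t + t*(1-P) = b + c + (d + d) := by
    apply hbij.injective
    rw [hG' t, ht]
    have h1 := hG' a; rw [show (1-P)*a + a*(1-P) = 0 by rw [haL0, haR0, add_zero], hphi0] at h1
    have h2 := hG' b; rw [show (1-P)*b + b*(1-P) = b by rw [hbL0, hbR, zero_add]] at h2
    have h3 := hG' c; rw [show (1-P)*c + c*(1-P) = c by rw [hcL, hcR0, add_zero]] at h3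
    have h4 := hG' d; rw [show (1-P)*d + d*(1-P) = d + d by rw [hdL, hdR]] at h4
    rw [claimBCD b c (d+d) hb hc hdd]
    calc G' * (φ a + φ b + φ c + φ d) + (φ a + φ b + φ c + φ d) * star G'
        = (G' * φ a + φ a * star G') + (G' * φ b + φ b * star G')
            + (G' * φ c + φ c * star G') + (G' * φ d + φ d * star G') := by noncomm_ring
      _ = φ b + φ c + φ (d + d) := by rw [← h1, ← h2, ← h3, ← h4, zero_add]
  have hT : t = a + b + c + d := by
    apply two_cancel
    calc t + t = (P*t + t*P) + ((1-P)*t + t*(1-P)) := by noncomm_ring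
      _ = ((a + a) + b + c) + (b + c + (d + d)) := by rw [e1, e2]
      _ = (a + b + c + d) + (a + b + c + d) := by abel
  rw [← hT, ht]
end

section
/- Let φ: A → A' be a bijective unital multiplicative *-Lie-Jordan n-map between unital C*-algebras and P₁ a nontrivial projection with P₂ = I - P₁. Then φ(P_i) is a projection in A' for i ∈ {1,2}, i.e., φ(P_i)² = φ(P_i). -/
lemma foldRep {R : Type*} [Ring R] [StarRing R] (k : ℕ) (z : R) (hz : star z = z) :
    (List.replicate k (1:R)).foldl jordanStar z = 2^k • z := by
  induction k generalizing z with
  | zero => simp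
  | succ k ih =>
    rw [List.replicate_succ, List.foldl_cons]
    have h1 : jordanStar z 1 = z + z := by simp [jordanStar, hz]
    rw [h1, ih (z+z) (by rw [star_add, hz]), pow_succ, mul_smul, two_smul]

lemma jordanOne {R : Type*} [Ring R] [StarRing R] (k : ℕ) (x : R) :
    jordanStar ((2^k : ℕ) • (1:R)) x = 2^(k+1) • x := by
  rw [jordanStar, star_nsmul, star_one, smul_mul_assoc, one_mul, mul_smul_comm, mul_one,
    pow_succ, mul_smul, two_smul, smul_add]

lemma key {A B : Type*} [Ring A] [StarRing A] [Module ℂ A] [Ring B] [StarRing B] [Module ℂ B]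
    (n : ℕ) (hn : 2 ≤ n) (φ : A → B) (hφ1 : φ 1 = 1)
    (hq : ∀ (x : A) (l : List A), l.length = n - 1 → φ (qStar x l) = qStar (φ x) (l.map φ))
    (Q : A) (hQ2 : Q * Q = Q) (hQs : star Q = Q) : φ Q * φ Q = φ Q := by
  obtain ⟨m, rfl⟩ : ∃ m, n = m + 2 := ⟨n - 2, by omega⟩
  set T := φ Q with hT
  have cancel : ∀ (k : ℕ) (x y : B), 2^k • x = 2^k • y → x = y := by
    intro k x y h
    have h' : ((2:ℂ)^k) • x = ((2:ℂ)^k) • y := by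
      have hx : ((2^k : ℕ) : ℂ) • x = (2^k : ℕ) • x := Nat.cast_smul_eq_nsmul ℂ _ x
      have hy : ((2^k : ℕ) : ℂ) • y = (2^k : ℕ) • y := Nat.cast_smul_eq_nsmul ℂ _ y
      push_cast at hx hy
      rw [hx, hy]; exact_mod_cast h
    have := congrArg (fun z => ((2:ℂ)^k)⁻¹ • z) h'
    simpa [smul_smul, inv_mul_cancel₀ (pow_ne_zero k (two_ne_zero (α := ℂ)))] using this
  -- e1 : φ (2^(m+1) • Q) = 2^(m+1) • T
  have len1 : (List.replicate m (1:A) ++ [Q]).length = m + 2 - 1 := by simp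
  have e1 := hq 1 _ len1
  rw [qStar, qStar, List.map_append, List.map_replicate, hφ1, List.map_singleton,
    List.foldl_append, List.foldl_append, foldRep m (1:A) (star_one A),
    foldRep m (1:B) (star_one B), List.foldl_cons, List.foldl_nil,
    List.foldl_cons, List.foldl_nil, jordanOne, jordanOne] at e1
  -- e3 : φ (2^(m+1) • Q) = 2^m • (T + star T)
  have len3 : (List.replicate (m+1) (1:A)).length = m + 2 - 1 := by simp
  have e3 := hq Q _ len3
  rw [qStar, qStar, List.map_replicate, hφ1, foldRep (m+1) Q hQs,
    List.replicate_succ, List.foldl_cons] at e3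
  have hT1 : jordanStar T 1 = T + star T := by simp [jordanStar]
  rw [hT1, foldRep m (T + star T) (by rw [star_add, star_star, add_comm])] at e3
  -- derive star T = T
  have hsa : star T = T := by
    have h13 : 2^(m+1) • T = 2^m • (T + star T) := e1.symm.trans e3
    have h13' : 2^m • T + 2^m • T = 2^m • T + 2^m • star T := by
      rw [smul_add] at h13
      rw [← h13, pow_succ, mul_smul, two_smul, smul_add]
    exact (cancel m _ _ (add_left_cancel h13')).symm
  -- e2 : φ (2^(m+1) • Q) = 2^(m+1) • (T * T)
  have len2 : (Q :: List.replicate m (1:A)).length = m + 2 - 1 := by simp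
  have e2 := hq Q _ len2
  have hQQ : jordanStar Q Q = Q + Q := by rw [jordanStar, hQs, hQ2]
  have hTT : jordanStar T T = T * T + T * T := by rw [jordanStar, hsa]
  rw [qStar, qStar, List.map_cons, List.map_replicate, hφ1, List.foldl_cons,
    List.foldl_cons, hQQ, hTT, foldRep m (Q + Q) (by rw [star_add, hQs]),
    foldRep m (T*T + T*T) (by rw [star_add, star_mul, hsa])] at e2
  -- combine e1 and e2
  have hsrc : (2:ℕ)^m • (Q + Q) = 2^(m+1) • Q := by
    rw [pow_succ, mul_smul, two_smul, smul_add]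
  rw [hsrc] at e2
  have h12 : 2^(m+1) • T = 2^m • (T*T + T*T) := e1.symm.trans e2
  have : 2^(m+1) • (T*T) = 2^(m+1) • T := by
    rw [h12, pow_succ, mul_smul, two_smul, smul_add]
  exact cancel _ _ _ this

/-- φ(P_i) is an idempotent. -/
theorem starLieJordanMap_proj_image {A B : Type*} [NormedRing A] [StarRing A] [CStarRing A] [NormedAlgebra ℂ A] [CompleteSpace A] [StarModule ℂ A] [NormedRing B] [StarRing B] [CStarRing B] [NormedAlgebra ℂ B] [CompleteSpace B] [StarModule ℂ B]
    (n : ℕ) (hn : 2 ≤ n) (φ : A → B) (hbij : Function.Bijective φ) (hφ1 : φ 1 = 1)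
    (hp : ∀ (x : A) (l : List A), l.length = n - 1 → φ (pStar x l) = pStar (φ x) (l.map φ))
    (hq : ∀ (x : A) (l : List A), l.length = n - 1 → φ (qStar x l) = qStar (φ x) (l.map φ)) (P : A) (hPidem : P * P = P) (hPsa : star P = P) (hP0 : P ≠ 0) (hP1 : P ≠ 1)
    (Pi : A) (hi : Pi = P ∨ Pi = 1 - P) :
    φ Pi * φ Pi = φ Pi := by
  rcases hi with h | h
  · rw [h]; exact key n hn φ hφ1 hq P hPidem hPsa
  · rw [h]; refine key n hn φ hφ1 hq (1 - P) ?_ ?_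
    · rw [sub_mul, one_mul, mul_sub, mul_one, hPidem, sub_self, sub_zero]
    · rw [star_sub, star_one, hPsa]
end
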